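/- Let u_n : [s,T] → [0,∞) satisfy u(t) ≤ C(u(r) + ∫_r^t u(v) dv) for all s ≤ r ≤ t ≤ T with t − r ≤ Δ, where C ≥ 1 and u is nondecreasing. Then u(T) ≤ u(s) · (C e^{CΔ})^{⌊(T−s)/Δ⌋ + 1}. -/
import Mathlib

open Set intervalIntegral Filter
open scoped Topology

/-- One-step Grönwall bound on an interval of length at most `Δ`. -/
lemma onestep16 (s T Δ C : ℝ) (u : ℝ → ℝ) (hΔ : 0 < Δ) (hC : 1 ≤ C)
    (hnn : ∀ x, 0 ≤ u x) (hmono : MonotoneOn u (Set.Icc s T))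
    (h : ∀ r t, s ≤ r → r ≤ t → t ≤ T → t - r ≤ Δ → u t ≤ C * (u r + ∫ v in r..t, u v))
    (r t : ℝ) (hsr : s ≤ r) (hrt : r ≤ t) (htT : t ≤ T) (hΔ' : t - r ≤ Δ) :
    u t ≤ C * Real.exp (C * Δ) * u r := by
  have hC0 : (0 : ℝ) < C := lt_of_lt_of_le one_pos hC
  have hsubsub : Icc r t ⊆ Icc s T := Icc_subset_Icc hsr htT
  -- integrability of u on subintervals
  have hint : ∀ x y, r ≤ x → x ≤ y → y ≤ t → IntervalIntegrable u MeasureTheory.volume x y := by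
    intro x y hx hxy hy
    apply MonotoneOn.intervalIntegrable
    apply hmono.mono
    rw [uIcc_of_le hxy]
    exact (Icc_subset_Icc hx hy).trans hsubsub
  set φ : ℝ → ℝ := fun x => u r + ∫ v in r..x, u v with hφdef
  -- φ is continuous on [r, t]
  have hφcont : ContinuousOn φ (Icc r t) := by
    apply continuousOn_const.add
    have : ContinuousOn (fun x => ∫ v in r..x, u v) (uIcc r t) := by
      apply continuousOn_primitive_interval
      rw [uIcc_of_le hrt]
      exact (hint r t le_rfl hrt le_rfl).1.congr_set_ae MeasureTheory.Ioc_ae_eq_Icc.symm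
    rwa [uIcc_of_le hrt] at this
  -- u z ≤ C * φ z on [r, t]
  have hu_le : ∀ z ∈ Icc r t, u z ≤ C * φ z := by
    intro z hz
    exact h r z hsr hz.1 (hz.2.trans htT) (by linarith [hz.2])
  -- φ is nonneg
  have hφnn : ∀ z ∈ Icc r t, 0 ≤ φ z := by
    intro z hz
    have : (0 : ℝ) ≤ ∫ v in r..z, u v :=
      intervalIntegral.integral_nonneg hz.1 fun x _ => hnn x
    have := hnn r
    simp only [hφdef]; linarith
  -- Grönwall inequality for φ
  have key : ∀ x ∈ Icc r t, φ x ≤ gronwallBound (u r) C 0 (x - r) := by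
    apply le_gronwallBound_of_liminf_deriv_right_le (f' := fun x => C * φ x) hφcont
    · -- slope condition
      intro x hx ρ hρ
      apply Eventually.frequently
      have hmem : ∀ᶠ z in 𝓝[>] x, z ∈ Ioc x t := by
        apply Ioc_mem_nhdsGT_of_mem
        exact ⟨le_rfl, hx.2⟩
      have hcont : Tendsto (fun z => C * φ z) (𝓝[>] x) (𝓝 (C * φ x)) := by
        have h1 : Tendsto φ (𝓝[Icc r t] x) (𝓝 (φ x)) :=
          hφcont x ⟨hx.1, hx.2.le⟩
        have h2 : 𝓝[>] x ≤ 𝓝[Icc r t] x := by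
          apply nhdsWithin_le_of_mem
          filter_upwards [hmem] with z hz
          exact ⟨hx.1.trans hz.1.le, hz.2⟩
        exact (h1.const_mul C).comp (tendsto_id.mono_left h2) |>.congr (fun z => rfl)
      have hlt : ∀ᶠ z in 𝓝[>] x, C * φ z < ρ :=
        hcont.eventually (Filter.Tendsto.eventually_lt_const hρ tendsto_id |>.mono fun _ h => h) |>.mono
          (fun z hz => hz)
      filter_upwards [hmem, hlt] with z hz hzlt
      have hxz : x < z := hz.1
      have hslope : (z - x)⁻¹ * (φ z - φ x) ≤ u z := by
        have hsub : φ z - φ x = ∫ v in x..z, u v := by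
          simp only [hφdef, add_sub_add_left_eq_sub]
          rw [← intervalIntegral.integral_interval_sub_left
            (hint r z le_rfl (hx.1.trans hxz.le) hz.2) (hint r x le_rfl hx.1 hx.2.le)]
        rw [hsub]
        have hle : (∫ v in x..z, u v) ≤ ∫ v in x..z, u z := by
          apply intervalIntegral.integral_mono_on hxz.le
            (hint x z hx.1 hxz.le hz.2) intervalIntegrable_const
          intro v hv
          exact hmono (hsubsub ⟨hx.1.trans hv.1, hv.2.trans hz.2⟩)
            (hsubsub ⟨hx.1.trans hxz.le, hz.2⟩) hv.2
        rw [intervalIntegral.integral_const] at hle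
        rw [inv_mul_le_iff₀ (by linarith)]
        calc (∫ v in x..z, u v) ≤ (z - x) • u z := hle
          _ = u z * (z - x) := by rw [smul_eq_mul]; ring
          _ = (z - x) * u z := mul_comm _ _
      calc (z - x)⁻¹ * (φ z - φ x) ≤ u z := hslope
        _ ≤ C * φ z := hu_le z ⟨hx.1.trans hxz.le, hz.2⟩
        _ < ρ := hzlt
    · -- φ r ≤ u r : φ r = u r + 0
      simp [hφdef]
    · intro x hx
      rw [add_zero]
  -- conclude
  have hφt : φ t ≤ u r * Real.exp (C * (t - r)) := by
    have := key t ⟨hrt, le_rfl⟩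
    rwa [gronwallBound_ε0] at this
  calc u t ≤ C * φ t := hu_le t ⟨hrt, le_rfl⟩
    _ ≤ C * (u r * Real.exp (C * (t - r))) := by
        exact mul_le_mul_of_nonneg_left hφt hC0.le
    _ ≤ C * Real.exp (C * Δ) * u r := by
        have hexp : Real.exp (C * (t - r)) ≤ Real.exp (C * Δ) :=
          Real.exp_le_exp.2 (mul_le_mul_of_nonneg_left hΔ' hC0.le)
        nlinarith [mul_le_mul_of_nonneg_left hexp (mul_nonneg hC0.le (hnn r))]

theorem stmt16 (s T Δ C : ℝ) (u : ℝ → ℝ) (hsT : s ≤ T) (hΔ : 0 < Δ) (hC : 1 ≤ C)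
    (hnn : ∀ x, 0 ≤ u x) (hmono : MonotoneOn u (Set.Icc s T))
    (h : ∀ r t, s ≤ r → r ≤ t → t ≤ T → t - r ≤ Δ → u t ≤ C * (u r + ∫ v in r..t, u v)) :
    u T ≤ u s * (C * Real.exp (C * Δ)) ^ (⌊(T - s) / Δ⌋₊ + 1) := by
  have hC0 : (0 : ℝ) < C := lt_of_lt_of_le one_pos hC
  set B : ℝ := C * Real.exp (C * Δ) with hB
  have hB1 : 1 ≤ B := by
    have : (1 : ℝ) ≤ Real.exp (C * Δ) := Real.one_le_exp (by positivity)
    nlinarith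
  have hB0 : 0 ≤ B := by linarith
  -- induction claim
  have main : ∀ n : ℕ, ∀ t, s ≤ t → t ≤ T → t - s ≤ (n + 1) * Δ → u t ≤ u s * B ^ (n + 1) := by
    intro n
    induction n with
    | zero =>
      intro t hst htT hle
      have hone := onestep16 s T Δ C u hΔ hC hnn hmono h s t le_rfl hst htT
        (by push_cast at hle; linarith)
      rw [← hB] at hone
      calc u t ≤ B * u s := hone
        _ = u s * B ^ (0 + 1) := by ring
    | succ n ih =>
      intro t hst htT hle
      by_cases hcase : t - s ≤ (n + 1) * Δ
      · have := ih t hst htT hcase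
        calc u t ≤ u s * B ^ (n + 1) := this
          _ ≤ u s * B ^ (n + 1 + 1) := by
              apply mul_le_mul_of_nonneg_left _ (hnn s)
              exact pow_le_pow_right₀ hB1 (by omega)
      · push_neg at hcase
        set r := t - Δ with hr
        have hn0 : (0 : ℝ) ≤ (n : ℝ) := Nat.cast_nonneg n
        have hsr : s ≤ r := by simp only [hr]; nlinarith
        have hrt : r ≤ t := by simp [hr]; linarith
        have hstep := onestep16 s T Δ C u hΔ hC hnn hmono h r t hsr hrt htT (by simp [hr])
        rw [← hB] at hstep
        have hrrec : r - s ≤ (n + 1) * Δ := by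
          push_cast at hle; simp only [hr]; linarith
        have := ih r hsr (hrt.trans htT) hrrec
        calc u t ≤ B * u r := hstep
          _ ≤ B * (u s * B ^ (n + 1)) := mul_le_mul_of_nonneg_left this hB0
          _ = u s * B ^ (n + 1 + 1) := by ring
  apply main ⌊(T - s) / Δ⌋₊ T hsT le_rfl
  have : (T - s) / Δ < ⌊(T - s) / Δ⌋₊ + 1 := Nat.lt_floor_add_one _
  calc T - s = (T - s) / Δ * Δ := by field_simp
    _ ≤ (⌊(T - s) / Δ⌋₊ + 1) * Δ := by
        apply mul_le_mul_of_nonneg_right this.le hΔ.le
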